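/- Uniqueness for 3D phase unwrapping (Theorem on phase unwrapping, algebraic core): Let κ > 0 and let f, g ∈ O_n both satisfy the 3D Itoh condition for κ. Let T be a finite set of directions containing the n directions (1,α_l,β_l), l = 1,…,n, where the family (α_l,β_l) satisfies the diversity condition, together with the direction (0,1,γ0) for some real γ0 with |γ0| < 1 (the y-line projection with slopes (0,γ0)) and the direction (0,0,1) (the z-line projection with slopes (0,0)). Suppose that (a) exp(iκ·g_t(m)) = exp(iκ·f_t(m)) for every t ∈ T and every m ∈ Z_p², and (b) the difference g_t - f_t, as a function on Z_p², is the same for every t ∈ T. Then g = f. -/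

import Mathlib

/-!
Put `h = g - f`. By (b) all projections of `h` along directions of `T` agree. By the Fourier
slice theorem, the 2D DFT of the projection along `(1, α, β)` at a frequency `(η, ζ)` is
`∑ᵢ Ĥᵢ(η, ζ) wⁱ` with `w = e(αη + βζ)` and `Ĥᵢ` the 2D DFT of the slice `h(i, ·, ·)`. For
`(η, ζ) ≠ 0` the diversity condition gives `n` distinct nodes `w` at which this Laurent polynomial
with exponents in `Z_n` takes one value, so `Ĥᵢ(η, ζ) = 0` for `i ≠ 0`; such a slice is then
constant on `Z_p²`, hence zero since it vanishes outside `Z_n²`. Comparing the projection along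
`(1, α, β)`, now the slice `h(0, ·, ·)`, with the one along `(0, 0, 1)` leaves `h` supported at the
origin, where its value is the `(0, 0, 1)`-projection at `0`. By (a) this value lies in `(2π/κ)ℤ`,
while the Itoh conditions give `|h(0)| = |h(0) - h(1, 0, 0)| < 2π/κ`, so it is `0`.
-/

open Complex MeasureTheory ProbabilityTheory BigOperators

noncomputable section

namespace Tomo3D

/-- `Z_m`: the integers in `[-(m-1)/2, (m-1)/2]` (for odd `m`). -/
def Zf (m : ℕ) : Finset ℤ :=
  Finset.Icc (-(((m : ℤ) - 1) / 2)) (((m : ℤ) - 1) / 2)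

/-- `Z_m²`. -/
def Zf2 (m : ℕ) : Finset (ℤ × ℤ) := Zf m ×ˢ Zf m

/-- The `p`-periodic Dirichlet kernel `D_p`. -/
def Dk (p : ℕ) (t : ℝ) : ℂ :=
  (p : ℂ)⁻¹ * ∑ l ∈ Zf p,
    Complex.exp (2 * (Real.pi : ℂ) * Complex.I * (l : ℂ) * (t : ℂ) / (p : ℂ))

/-- The class `O_n`: objects supported in `Z_n³`. -/
def IsObj (n : ℕ) (f : ℤ → ℤ → ℤ → ℂ) : Prop :=
  ∀ i j k : ℤ, i ∉ Zf n ∨ j ∉ Zf n ∨ k ∉ Zf n → f i j k = 0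

/-- Continuous interpolation `f̃` of an object. -/
def interp (n : ℕ) (f : ℤ → ℤ → ℤ → ℂ) (x y z : ℝ) : ℂ :=
  ∑ i ∈ Zf n, ∑ j ∈ Zf n, ∑ k ∈ Zf n,
    f i j k * Dk (2 * n - 1) (x - (i : ℝ)) * Dk (2 * n - 1) (y - (j : ℝ)) *
      Dk (2 * n - 1) (z - (k : ℝ))

/-- Directions `(1,α,β)`, `(α,1,β)`, `(α,β,1)`. -/
inductive Dir
  | dx (α β : ℝ)
  | dy (α β : ℝ)
  | dz (α β : ℝ)

/-- Validity of a direction: the slopes satisfy `|α| < 1`, `|β| < 1`. -/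
def Dir.valid : Dir → Prop
  | .dx α β => |α| < 1 ∧ |β| < 1
  | .dy α β => |α| < 1 ∧ |β| < 1
  | .dz α β => |α| < 1 ∧ |β| < 1

/-- The vector in `ℝ³` attached to a direction. -/
def Dir.toVec : Dir → ℝ × ℝ × ℝ
  | .dx α β => (1, α, β)
  | .dy α β => (α, 1, β)
  | .dz α β => (α, β, 1)

/-- Two directions are parallel if one is a real scalar multiple of the other. -/
def Dir.Parallel (t t' : Dir) : Prop :=
  ∃ c : ℝ, t'.toVec = c • t.toVec ∨ t.toVec = c • t'.toVec

/-- Discrete projection of an object along a direction, regarded as a function on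
`Z_{2n-1}²` extended by zero to `ℤ²`. -/
def proj (n : ℕ) (f : ℤ → ℤ → ℤ → ℂ) : Dir → ℤ × ℤ → ℂ
  | .dx α β => fun c =>
      if c ∈ Zf2 (2 * n - 1) then
        ∑ i ∈ Zf n, interp n f (i : ℝ) (α * (i : ℝ) + (c.1 : ℝ)) (β * (i : ℝ) + (c.2 : ℝ))
      else 0
  | .dy α β => fun c =>
      if c ∈ Zf2 (2 * n - 1) then
        ∑ j ∈ Zf n, interp n f (α * (j : ℝ) + (c.1 : ℝ)) (j : ℝ) (β * (j : ℝ) + (c.2 : ℝ))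
      else 0
  | .dz α β => fun c =>
      if c ∈ Zf2 (2 * n - 1) then
        ∑ k ∈ Zf n, interp n f (α * (k : ℝ) + (c.1 : ℝ)) (β * (k : ℝ) + (c.2 : ℝ)) (k : ℝ)
      else 0

/-- 3D discrete Fourier transform of an object (defined for all real frequencies). -/
def ft3 (n : ℕ) (f : ℤ → ℤ → ℤ → ℂ) (ξ η ζ : ℝ) : ℂ :=
  ∑ i ∈ Zf n, ∑ j ∈ Zf n, ∑ k ∈ Zf n,
    f i j k *
      Complex.exp (-(2 * (Real.pi : ℂ) * Complex.I) *
        ((ξ : ℂ) * (i : ℂ) + (η : ℂ) * (j : ℂ) + (ζ : ℂ) * (k : ℂ)) /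
          (((2 * n - 1 : ℕ) : ℂ)))

/-- 2D discrete Fourier transform of a projection (defined for all real frequencies). -/
def ft2 (n : ℕ) (g : ℤ × ℤ → ℂ) (η ζ : ℝ) : ℂ :=
  ∑ c ∈ Zf2 (2 * n - 1),
    g c *
      Complex.exp (-(2 * (Real.pi : ℂ) * Complex.I) *
        ((η : ℂ) * (c.1 : ℂ) + (ζ : ℂ) * (c.2 : ℂ)) / (((2 * n - 1 : ℕ) : ℂ)))

/-- Diffraction pattern of `h : Z_p² → ℂ`. -/
def dpat (p : ℕ) (h : ℤ × ℤ → ℂ) (w : ℝ × ℝ) : ℝ :=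
  ‖∑ m ∈ Zf2 p,
      h m * Complex.exp (-(2 * (Real.pi : ℂ) * Complex.I) *
        ((m.1 : ℂ) * (w.1 : ℂ) + (m.2 : ℂ) * (w.2 : ℂ)))‖ ^ 2

/-- `h₁` and `h₂` produce the same diffraction pattern (on `[-1/2,1/2]²`). -/
def SameDP (p : ℕ) (h₁ h₂ : ℤ × ℤ → ℂ) : Prop :=
  ∀ w : ℝ × ℝ, w.1 ∈ Set.Icc (-(1 : ℝ) / 2) (1 / 2) →
    w.2 ∈ Set.Icc (-(1 : ℝ) / 2) (1 / 2) → dpat p h₁ w = dpat p h₂ w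

/-- Autocorrelation of `h : ℤ² → ℂ`. -/
def autocorr (h : ℤ × ℤ → ℂ) (m : ℤ × ℤ) : ℂ :=
  ∑' m' : ℤ × ℤ, h (m' + m) * (starRingEnd ℂ) (h m')

/-- The random phase mask `μ(m) = exp(i φ(m))`. -/
def mask {Ω : Type*} (φ : ℤ × ℤ → Ω → ℝ) (ω : Ω) (m : ℤ × ℤ) : ℂ :=
  Complex.exp (Complex.I * ((φ m ω : ℝ) : ℂ))

/-- The Mask Assumption: the phases `φ(m)`, `m ∈ Z_p²`, are independent real random
variables whose laws have no atoms. -/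
def MaskAssumption {Ω : Type*} [MeasurableSpace Ω] (P : Measure Ω) (p : ℕ)
    (φ : ℤ × ℤ → Ω → ℝ) : Prop :=
  (∀ m, Measurable (φ m)) ∧
  iIndepFun (fun m : {m : ℤ × ℤ // m ∈ Zf2 p} => φ m.1) P ∧
  ∀ m ∈ Zf2 p, ∀ r : ℝ, P {ω | φ m ω = r} = 0

/-- The uniform random phase mask: independent phases, uniformly distributed on `[0,2π)`. -/
def UniformMask {Ω : Type*} [MeasurableSpace Ω] (P : Measure Ω) (p : ℕ)
    (φ : ℤ × ℤ → Ω → ℝ) : Prop :=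
  (∀ m, Measurable (φ m)) ∧
  iIndepFun (fun m : {m : ℤ × ℤ // m ∈ Zf2 p} => φ m.1) P ∧
  ∀ m ∈ Zf2 p,
    P.map (φ m) = (ENNReal.ofReal (2 * Real.pi))⁻¹ • volume.restrict (Set.Ico 0 (2 * Real.pi))

/-- The representative of `x` modulo `p` lying in `Z_p` (for odd `p`). -/
def zmodRep (p : ℕ) (x : ℤ) : ℤ := (x + ((p : ℤ) - 1) / 2) % (p : ℤ) - ((p : ℤ) - 1) / 2

/-- `p`-periodic extension to `ℤ²` of a function on `Z_p²`. -/
def perExt (p : ℕ) (h : ℤ × ℤ → ℂ) (m : ℤ × ℤ) : ℂ := h (zmodRep p m.1, zmodRep p m.2)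

/-- A function on `ℤ²` is supported on a line. -/
def SuppOnLine (h : ℤ × ℤ → ℂ) : Prop :=
  ∃ a b : ℝ × ℝ, ∀ m : ℤ × ℤ, h m ≠ 0 →
    ∃ s : ℝ, ((m.1 : ℝ), (m.2 : ℝ)) = (a.1 + s * b.1, a.2 + s * b.2)

/-- The diversity condition for a family of slope pairs. -/
def Diversity (n : ℕ) (α β : Fin n → ℝ) : Prop :=
  (∀ l, |α l| < 1 ∧ |β l| < 1) ∧
  ∀ ξη : ℤ × ℤ, ξη ∈ Zf2 (2 * n - 1) → ξη ≠ (0, 0) →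
    ∀ l l' : Fin n, l ≠ l' →
      ¬ ∃ z : ℤ,
        α l * (ξη.1 : ℝ) + β l * (ξη.2 : ℝ) - (α l' * (ξη.1 : ℝ) + β l' * (ξη.2 : ℝ))
          = (z : ℝ) * (((2 * n - 1 : ℕ) : ℝ))

/-- The 3D Itoh condition for `κ`: variation less than `π/κ` between adjacent grid points. -/
def Itoh (n : ℕ) (κ : ℝ) (f : ℤ → ℤ → ℤ → ℂ) : Prop :=
  ∀ i j k i' j' k' : ℤ,
    i ∈ Zf n → j ∈ Zf n → k ∈ Zf n → i' ∈ Zf n → j' ∈ Zf n → k' ∈ Zf n →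
    ((|i - i'| = 1 ∧ j = j' ∧ k = k') ∨ (i = i' ∧ |j - j'| = 1 ∧ k = k') ∨
      (i = i' ∧ j = j' ∧ |k - k'| = 1)) →
    ‖f i j k - f i' j' k'‖ < Real.pi / κ

/-- The common set `L_{t,t'}(f)` for directions `t = (α,β,1)` and `t' = (α',β',1)`. -/
def commonSet (n : ℕ) (f : ℤ → ℤ → ℤ → ℂ) (α β α' β' : ℝ) : Set ((ℝ × ℝ) × (ℝ × ℝ)) :=
  {kk | ft2 n (proj n f (Dir.dz α β)) kk.1.1 kk.1.2
      = ft2 n (proj n f (Dir.dz α' β')) kk.2.1 kk.2.2}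

/-- `k` has a slope (its first component is nonzero) which is not a fraction over `Z_p`. -/
def BadSlope (p : ℕ) (k : ℝ × ℝ) : Prop :=
  k.1 ≠ 0 ∧ ∀ a b : ℤ, a ∈ Zf p → b ∈ Zf p → b ≠ 0 → k.2 / k.1 ≠ (a : ℝ) / (b : ℝ)

/-- Sector condition: every nonzero value of `h` has phase angle in `[a, b]` (mod 2π). -/
def Sector (a b : ℝ) (h : ℤ × ℤ → ℂ) : Prop :=
  ∀ m : ℤ × ℤ, h m ≠ 0 →
    ∃ θ ∈ Set.Icc a b, h m = ((‖h m‖ : ℝ) : ℂ) * Complex.exp (Complex.I * (θ : ℂ))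

open scoped Classical in
/-- Number of points of `Z_p²` where `h` does not vanish. -/
def nnz (p : ℕ) (h : ℤ × ℤ → ℂ) : ℕ := ((Zf2 p).filter fun m => h m ≠ 0).card

open scoped Real
open Finset

def fourierExp (p : ℕ) (z : ℂ) : ℂ := Complex.exp (2 * π * I * z / p)

section Character

variable {p : ℕ}

lemma fourierExp_add (z w : ℂ) : fourierExp p (z + w) = fourierExp p z * fourierExp p w := by
  rw [fourierExp, fourierExp, fourierExp, ← Complex.exp_add]
  ring_nf

lemma fourierExp_zero : fourierExp p 0 = 1 := by
  simp [fourierExp]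

lemma fourierExp_ne_zero (z : ℂ) : fourierExp p z ≠ 0 :=
  Complex.exp_ne_zero _

lemma fourierExp_int_mul (m : ℤ) (z : ℂ) : fourierExp p (m * z) = fourierExp p z ^ m := by
  rw [fourierExp, fourierExp, ← Complex.exp_int_mul]
  ring_nf

lemma exp_neg_two_pi_I_mul_div (z : ℂ) :
    Complex.exp (-(2 * π * I) * z / p) = fourierExp p (-z) := by
  rw [fourierExp]
  ring_nf

lemma fourierExp_eq_one_iff (hp : p ≠ 0) {z : ℂ} : fourierExp p z = 1 ↔ ∃ m : ℤ, z = m * p := by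
  have hp' : (p : ℂ) ≠ 0 := Nat.cast_ne_zero.mpr hp
  rw [fourierExp, Complex.exp_eq_one_iff]
  refine exists_congr fun m => ⟨fun h => ?_, fun h => ?_⟩
  · have h2 : (2 * π * I : ℂ) ≠ 0 := by simp [Real.pi_ne_zero, I_ne_zero]
    rw [div_eq_iff hp'] at h
    apply mul_left_cancel₀ h2
    linear_combination h
  · rw [h]
    field_simp

lemma fourierExp_intCast_eq_one_iff (hp : p ≠ 0) (x : ℤ) :
    fourierExp p x = 1 ↔ (p : ℤ) ∣ x := by
  rw [fourierExp_eq_one_iff hp]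
  refine exists_congr fun m => ?_
  rw [mul_comm (p : ℤ)]
  exact_mod_cast Iff.rfl

lemma exists_int_of_fourierExp_eq (hp : p ≠ 0) {z w : ℂ} (h : fourierExp p z = fourierExp p w) :
    ∃ m : ℤ, z - w = m * p := by
  rw [← fourierExp_eq_one_iff hp]
  apply mul_right_cancel₀ (fourierExp_ne_zero w)
  rw [← fourierExp_add, sub_add_cancel, h, one_mul]

end Character

section Grid

variable {p : ℕ}

lemma mem_Zf {x : ℤ} : x ∈ Zf p ↔ -(((p : ℤ) - 1) / 2) ≤ x ∧ x ≤ ((p : ℤ) - 1) / 2 :=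
  mem_Icc

lemma pos_of_mem_Zf {x : ℤ} (hx : x ∈ Zf p) : 0 < p := by
  rw [mem_Zf] at hx
  omega

lemma zero_mem_Zf_of_mem {x : ℤ} (hx : x ∈ Zf p) : 0 ∈ Zf p := by
  rw [mem_Zf] at hx ⊢
  omega

lemma card_Zf (hp : Odd p) : #(Zf p) = p := by
  obtain ⟨M, rfl⟩ := hp
  simp only [Zf, Int.card_Icc]
  omega

lemma eq_of_mem_Zf_of_dvd_sub {a b : ℤ} (ha : a ∈ Zf p) (hb : b ∈ Zf p) (h : (p : ℤ) ∣ a - b) :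
    a = b := by
  rw [mem_Zf] at ha hb
  have := Int.eq_zero_of_abs_lt_dvd h (by rw [abs_lt]; omega)
  omega

lemma sum_zpow_Zf_eq_zero {K : Type*} [Field K] {ω : K} (hp : Odd p) (hω : ω ^ p = 1)
    (hω1 : ω ≠ 1) : ∑ l ∈ Zf p, ω ^ l = 0 := by
  have hω0 : ω ≠ 0 := by rintro rfl; simp [hp.pos.ne'] at hω
  obtain ⟨M, rfl⟩ := hp
  have hM : ((((2 * M + 1 : ℕ) : ℤ) - 1) / 2) = M := by omega
  rw [Zf, Int.Icc_eq_finset_map, sum_map, hM]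
  have hcard : ((M : ℤ) + 1 - -(M : ℤ)).toNat = 2 * M + 1 := by omega
  simp only [hcard, Function.Embedding.trans_apply, Nat.castEmbedding_apply,
    addLeftEmbedding_apply, zpow_add₀ hω0, zpow_natCast, ← mul_sum,
    geom_sum_eq hω1, hω, sub_self, zero_div, mul_zero]

lemma sum_fourierExp_mul_sub (hp : Odd p) {a b : ℤ} (ha : a ∈ Zf p) (hb : b ∈ Zf p) :
    ∑ l ∈ Zf p, fourierExp p (l * (a - b)) = if a = b then (p : ℂ) else 0 := by
  split_ifs with hab
  · simp [hab, fourierExp_zero, card_Zf hp]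
  · have hp0 : p ≠ 0 := hp.pos.ne'
    have hcast : ((a : ℂ) - b) = ((a - b : ℤ) : ℂ) := by push_cast; ring
    simp_rw [hcast, fourierExp_int_mul]
    refine sum_zpow_Zf_eq_zero hp ?_ ?_
    · rw [← zpow_natCast, ← fourierExp_int_mul, fourierExp_eq_one_iff hp0]
      exact ⟨a - b, by push_cast; ring⟩
    · rw [Ne, fourierExp_intCast_eq_one_iff hp0]
      exact fun h => hab (eq_of_mem_Zf_of_dvd_sub ha hb h)

end Grid

section Kernel

variable {p : ℕ}

lemma Dk_eq_sum (t : ℝ) : Dk p t = (p : ℂ)⁻¹ * ∑ l ∈ Zf p, fourierExp p (l * t) := by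
  simp only [Dk, fourierExp, mul_assoc]

lemma Dk_intCast_sub (hp : Odd p) {a b : ℤ} (ha : a ∈ Zf p) (hb : b ∈ Zf p) :
    Dk p ((a : ℝ) - b) = if a = b then 1 else 0 := by
  have hp0 : (p : ℂ) ≠ 0 := Nat.cast_ne_zero.mpr hp.pos.ne'
  rw [Dk_eq_sum]
  push_cast
  rw [sum_fourierExp_mul_sub hp ha hb]
  split_ifs <;> simp [hp0]

lemma sum_Dk_add_mul_fourierExp (hp : Odd p) (t : ℝ) {η : ℤ} (hη : η ∈ Zf p) :
    ∑ c ∈ Zf p, Dk p (t + c) * fourierExp p (-(η * c)) = fourierExp p (η * t) := by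
  have hp0 : (p : ℂ) ≠ 0 := Nat.cast_ne_zero.mpr hp.pos.ne'
  calc ∑ c ∈ Zf p, Dk p (t + c) * fourierExp p (-(η * c))
      = (p : ℂ)⁻¹ * ∑ l ∈ Zf p, fourierExp p (l * t) *
          ∑ c ∈ Zf p, fourierExp p (c * (l - η)) := by
        simp_rw [Dk_eq_sum, mul_sum, sum_mul, mul_assoc, ← fourierExp_add]
        rw [sum_comm]
        refine sum_congr rfl fun l _ => sum_congr rfl fun c _ => ?_
        push_cast
        ring_nf
    _ = (p : ℂ)⁻¹ * ∑ l ∈ Zf p, fourierExp p (l * t) * if l = η then (p : ℂ) else 0 := by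
        congr 1
        refine sum_congr rfl fun l hl => ?_
        rw [← sum_fourierExp_mul_sub hp hl hη]
    _ = fourierExp p (η * t) := by
        simp [hη, hp0, mul_comm]

end Kernel

section Projection

variable {n : ℕ}

lemma odd_two_mul_sub_one_of_mem_Zf {x : ℤ} (hx : x ∈ Zf (2 * n - 1)) : Odd (2 * n - 1) :=
  ⟨n - 1, by have := pos_of_mem_Zf hx; omega⟩

lemma Zf_subset_Zf_two_mul_sub_one : Zf n ⊆ Zf (2 * n - 1) := by
  intro x hx
  rw [mem_Zf] at hx ⊢
  omega

lemma IsObj.sub {f g : ℤ → ℤ → ℤ → ℂ} (hg : IsObj n g) (hf : IsObj n f) :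
    IsObj n fun i j k => g i j k - f i j k := by
  intro i j k h
  simp [hg i j k h, hf i j k h]

lemma sum_mul_Dk_sub {a : ℤ} (ha : a ∈ Zf n) (A : ℤ → ℂ) :
    ∑ i ∈ Zf n, A i * Dk (2 * n - 1) (a - i) = A a := by
  have hp := odd_two_mul_sub_one_of_mem_Zf (Zf_subset_Zf_two_mul_sub_one ha)
  rw [sum_eq_single a]
  · rw [Dk_intCast_sub hp (Zf_subset_Zf_two_mul_sub_one ha) (Zf_subset_Zf_two_mul_sub_one ha),
      if_pos rfl, mul_one]
  · intro i hi hia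
    rw [Dk_intCast_sub hp (Zf_subset_Zf_two_mul_sub_one ha) (Zf_subset_Zf_two_mul_sub_one hi),
      if_neg (Ne.symm hia), mul_zero]
  · exact fun h => absurd ha h

lemma interp_intCast_left (f : ℤ → ℤ → ℤ → ℂ) {i : ℤ} (hi : i ∈ Zf n) (y z : ℝ) :
    interp n f i y z =
      ∑ j ∈ Zf n, ∑ k ∈ Zf n, f i j k * Dk (2 * n - 1) (y - j) * Dk (2 * n - 1) (z - k) := by
  rw [interp, ← sum_mul_Dk_sub hi fun i' =>
    ∑ j ∈ Zf n, ∑ k ∈ Zf n, f i' j k * Dk (2 * n - 1) (y - j) * Dk (2 * n - 1) (z - k)]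
  simp only [sum_mul]
  exact sum_congr rfl fun i' _ => sum_congr rfl fun j _ => sum_congr rfl fun k _ => by ring

lemma interp_intCast (f : ℤ → ℤ → ℤ → ℂ) {a b c : ℤ} (ha : a ∈ Zf n) (hb : b ∈ Zf n)
    (hc : c ∈ Zf n) : interp n f a b c = f a b c := by
  rw [interp_intCast_left f ha]
  simp_rw [sum_mul_Dk_sub hc, sum_mul_Dk_sub hb]

lemma proj_sub (f g : ℤ → ℤ → ℤ → ℂ) (t : Dir) (c : ℤ × ℤ) :
    proj n (fun i j k => g i j k - f i j k) t c = proj n g t c - proj n f t c := by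
  cases t <;> simp only [proj] <;> split_ifs <;>
    simp [interp, sub_mul, sum_sub_distrib]

lemma proj_dz_zero_zero (f : ℤ → ℤ → ℤ → ℂ) {c : ℤ × ℤ} (hc₁ : c.1 ∈ Zf n)
    (hc₂ : c.2 ∈ Zf n) : proj n f (.dz 0 0) c = ∑ k ∈ Zf n, f c.1 c.2 k := by
  have hc : c ∈ Zf2 (2 * n - 1) :=
    mem_product.mpr ⟨Zf_subset_Zf_two_mul_sub_one hc₁, Zf_subset_Zf_two_mul_sub_one hc₂⟩
  simp only [proj, if_pos hc, zero_mul, zero_add]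
  exact sum_congr rfl fun k hk => interp_intCast f hc₁ hc₂ hk

lemma proj_dx_of_eq_zero_of_ne_zero {f : ℤ → ℤ → ℤ → ℂ} (hslab : ∀ i ≠ 0, ∀ j k, f i j k = 0)
    (α β : ℝ) {c : ℤ × ℤ} (hc₁ : c.1 ∈ Zf n) (hc₂ : c.2 ∈ Zf n) :
    proj n f (.dx α β) c = f 0 c.1 c.2 := by
  have hc : c ∈ Zf2 (2 * n - 1) :=
    mem_product.mpr ⟨Zf_subset_Zf_two_mul_sub_one hc₁, Zf_subset_Zf_two_mul_sub_one hc₂⟩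
  have h0 : (0 : ℤ) ∈ Zf n := zero_mem_Zf_of_mem hc₁
  simp only [proj, if_pos hc]
  rw [sum_eq_single 0]
  · simpa using interp_intCast f h0 hc₁ hc₂
  · intro i hi hi0
    simp [interp_intCast_left f hi, hslab i hi0]
  · exact fun h => absurd h0 h

end Projection

section Fourier

variable {n : ℕ}

lemma ft2_eq_sum (g : ℤ × ℤ → ℂ) (η ζ : ℝ) :
    ft2 n g η ζ = ∑ c ∈ Zf2 (2 * n - 1), g c * fourierExp (2 * n - 1) (-(η * c.1 + ζ * c.2)) := by
  simp_rw [ft2, exp_neg_two_pi_I_mul_div]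

lemma sum_Dk_mul_Dk_mul_fourierExp {η ζ : ℤ} (hη : η ∈ Zf (2 * n - 1)) (hζ : ζ ∈ Zf (2 * n - 1))
    (t u : ℝ) :
    ∑ c ∈ Zf2 (2 * n - 1), Dk (2 * n - 1) (t + c.1) * Dk (2 * n - 1) (u + c.2) *
        fourierExp (2 * n - 1) (-(η * c.1 + ζ * c.2)) =
      fourierExp (2 * n - 1) (η * t + ζ * u) := by
  have hp := odd_two_mul_sub_one_of_mem_Zf hη
  rw [fourierExp_add, ← sum_Dk_add_mul_fourierExp hp t hη, ← sum_Dk_add_mul_fourierExp hp u hζ,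
    sum_mul_sum, Zf2, sum_product]
  refine sum_congr rfl fun c₁ _ => sum_congr rfl fun c₂ _ => ?_
  rw [neg_add, fourierExp_add]
  ring

/-- The Fourier slice theorem for the projection along `(1, α, β)`. -/
theorem ft2_proj_dx (f : ℤ → ℤ → ℤ → ℂ) (α β : ℝ) {η ζ : ℤ} (hη : η ∈ Zf (2 * n - 1))
    (hζ : ζ ∈ Zf (2 * n - 1)) :
    ft2 n (proj n f (.dx α β)) η ζ = ft3 n f (-(α * η + β * ζ)) η ζ := by
  rw [ft2_eq_sum]
  simp_rw [ft3, exp_neg_two_pi_I_mul_div]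
  calc ∑ c ∈ Zf2 (2 * n - 1), proj n f (.dx α β) c * fourierExp (2 * n - 1) (-(η * c.1 + ζ * c.2))
      = ∑ c ∈ Zf2 (2 * n - 1), ∑ i ∈ Zf n, ∑ j ∈ Zf n, ∑ k ∈ Zf n, f i j k *
          (Dk (2 * n - 1) ((α * i - j : ℝ) + c.1) * Dk (2 * n - 1) ((β * i - k : ℝ) + c.2) *
            fourierExp (2 * n - 1) (-(η * c.1 + ζ * c.2))) := by
        refine sum_congr rfl fun c hc => ?_
        simp only [proj, if_pos hc, sum_mul]
        refine sum_congr rfl fun i hi => ?_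
        rw [interp_intCast_left f hi, sum_mul]
        refine sum_congr rfl fun j _ => ?_
        rw [sum_mul]
        refine sum_congr rfl fun k _ => ?_
        ring_nf
    _ = ∑ i ∈ Zf n, ∑ j ∈ Zf n, ∑ k ∈ Zf n, f i j k *
          fourierExp (2 * n - 1) (η * (α * i - j : ℝ) + ζ * (β * i - k : ℝ)) := by
        rw [sum_comm]
        refine sum_congr rfl fun i _ => ?_
        rw [sum_comm]
        refine sum_congr rfl fun j _ => ?_
        rw [sum_comm]
        refine sum_congr rfl fun k _ => ?_
        rw [← mul_sum, sum_Dk_mul_Dk_mul_fourierExp hη hζ]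
    _ = _ := by
        refine sum_congr rfl fun i _ => sum_congr rfl fun j _ => sum_congr rfl fun k _ => ?_
        push_cast
        ring_nf

lemma ft3_eq_sum_ft2_mul_zpow {f : ℤ → ℤ → ℤ → ℂ} (hf : IsObj n f) (ξ η ζ : ℝ) :
    ft3 n f ξ η ζ =
      ∑ i ∈ Zf n, ft2 n (fun c => f i c.1 c.2) η ζ * fourierExp (2 * n - 1) (-ξ) ^ i := by
  have hslice : ∀ i, ft2 n (fun c => f i c.1 c.2) η ζ =
      ∑ j ∈ Zf n, ∑ k ∈ Zf n, f i j k * fourierExp (2 * n - 1) (-(η * j + ζ * k)) := by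
    intro i
    rw [ft2_eq_sum, Zf2, ← sum_subset (product_subset_product Zf_subset_Zf_two_mul_sub_one
      Zf_subset_Zf_two_mul_sub_one), sum_product]
    intro c _ hc
    rw [mem_product, not_and_or] at hc
    rw [hf _ _ _ (Or.inr hc), zero_mul]
  simp_rw [ft3, hslice, exp_neg_two_pi_I_mul_div, sum_mul]
  refine sum_congr rfl fun i _ => sum_congr rfl fun j _ => sum_congr rfl fun k _ => ?_
  rw [mul_assoc, ← fourierExp_int_mul, ← fourierExp_add]
  ring_nf

lemma sum_ft2_mul_fourierExp (g : ℤ × ℤ → ℂ) {a b : ℤ} (ha : a ∈ Zf (2 * n - 1))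
    (hb : b ∈ Zf (2 * n - 1)) :
    ∑ w ∈ Zf2 (2 * n - 1), ft2 n g w.1 w.2 * fourierExp (2 * n - 1) (w.1 * a + w.2 * b) =
      ((2 * n - 1 : ℕ) : ℂ) ^ 2 * g (a, b) := by
  have hp := odd_two_mul_sub_one_of_mem_Zf ha
  calc ∑ w ∈ Zf2 (2 * n - 1), ft2 n g w.1 w.2 * fourierExp (2 * n - 1) (w.1 * a + w.2 * b)
      = ∑ c ∈ Zf2 (2 * n - 1), g c *
          ((∑ η ∈ Zf (2 * n - 1), fourierExp (2 * n - 1) (η * (a - c.1))) *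
            ∑ ζ ∈ Zf (2 * n - 1), fourierExp (2 * n - 1) (ζ * (b - c.2))) := by
        conv_lhs => simp only [ft2_eq_sum, sum_mul]
        rw [sum_comm]
        refine sum_congr rfl fun c _ => ?_
        rw [sum_mul_sum, Zf2, sum_product]
        simp_rw [mul_sum]
        refine sum_congr rfl fun η _ => sum_congr rfl fun ζ _ => ?_
        rw [mul_assoc, ← fourierExp_add, ← fourierExp_add]
        push_cast
        ring_nf
    _ = ∑ c ∈ Zf2 (2 * n - 1), g c *
          ((if a = c.1 then ((2 * n - 1 : ℕ) : ℂ) else 0) *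
            if b = c.2 then ((2 * n - 1 : ℕ) : ℂ) else 0) := by
        refine sum_congr rfl fun c hc => ?_
        rw [sum_fourierExp_mul_sub hp ha (mem_product.mp hc).1,
          sum_fourierExp_mul_sub hp hb (mem_product.mp hc).2]
    _ = _ := by
        rw [sum_eq_single (a, b)]
        · simp only [if_true, sq]
          ring
        · intro c _ hc
          rcases not_and_or.mp fun h : a = c.1 ∧ b = c.2 => hc (Prod.ext h.1.symm h.2.symm)
            with h | h <;> simp [h]
        · exact fun h => absurd (mem_product.mpr ⟨ha, hb⟩) h

lemma eq_of_ft2_eq_zero {g : ℤ × ℤ → ℂ}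
    (h0 : ∀ w ∈ Zf2 (2 * n - 1), w ≠ (0, 0) → ft2 n g w.1 w.2 = 0) {a b : ℤ × ℤ}
    (ha : a ∈ Zf2 (2 * n - 1)) (hb : b ∈ Zf2 (2 * n - 1)) : g a = g b := by
  have hp : ((2 * n - 1 : ℕ) : ℂ) ^ 2 ≠ 0 :=
    pow_ne_zero 2 (Nat.cast_ne_zero.mpr (pos_of_mem_Zf (mem_product.mp ha).1).ne')
  have hconst : ∀ c ∈ Zf2 (2 * n - 1), ((2 * n - 1 : ℕ) : ℂ) ^ 2 * g c = ft2 n g 0 0 := by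
    intro c hc
    obtain ⟨hc₁, hc₂⟩ := mem_product.mp hc
    rw [← sum_ft2_mul_fourierExp g hc₁ hc₂, sum_eq_single (0, 0)]
    · simp [fourierExp_zero]
    · exact fun w hw hw0 => by rw [h0 w hw hw0, zero_mul]
    · exact fun h => absurd (mem_product.mpr ⟨zero_mem_Zf_of_mem hc₁, zero_mem_Zf_of_mem hc₁⟩) h
  exact mul_left_cancel₀ hp ((hconst a ha).trans (hconst b hb).symm)

end Fourier

open Polynomial in
theorem eq_zero_of_sum_mul_zpow_eq {K ι : Type*} [Field K] [Fintype ι] {M : ℤ} {c : ℤ → K}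
    {v : K} {w : ι → K} (hw : ∀ l, w l ≠ 0) (hinj : Function.Injective w)
    (hcard : 2 * M < Fintype.card ι) (hsum : ∀ l, ∑ i ∈ Icc (-M) M, c i * w l ^ i = v)
    {i : ℤ} (hi : i ∈ Icc (-M) M) (hi0 : i ≠ 0) : c i = 0 := by
  have hM : 0 ≤ M := by rw [mem_Icc] at hi; omega
  lift M to ℕ using hM
  have hshift : ∀ x : K, x ≠ 0 → ∀ i ∈ Icc (-(M : ℤ)) M, x ^ (i + M).toNat = x ^ i * x ^ M := by
    intro x hx i hi
    rw [mem_Icc] at hi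
    rw [← zpow_natCast, Int.toNat_of_nonneg (by omega), zpow_add₀ hx, zpow_natCast]
  -- `X ^ M * (∑ c i X ^ i - v)` has degree at most `2M` and vanishes at every `w l`.
  set Q : K[X] := ∑ i ∈ Icc (-(M : ℤ)) M, C (c i) * X ^ (i + M).toNat - C v * X ^ M
  have hQ : Q = 0 := by
    refine eq_zero_of_natDegree_lt_card_of_eval_eq_zero Q hinj (fun l => ?_) ?_
    · simp only [Q, eval_sub, eval_finsetSum, eval_mul, eval_C, eval_pow, eval_X]
      rw [sum_congr rfl fun i hi => by rw [hshift _ (hw l) i hi, ← mul_assoc], ← sum_mul, hsum l,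
        sub_self]
    · refine (natDegree_sub_le _ _).trans_lt (max_lt ?_ ?_)
      · refine (natDegree_sum_le_of_forall_le _ _ (n := 2 * M) fun i hi => ?_).trans_lt ?_
        · rw [mem_Icc] at hi
          exact (natDegree_C_mul_X_pow_le _ _).trans (by omega)
        · omega
      · exact (natDegree_C_mul_X_pow_le _ _).trans_lt (by omega)
  have hcoeff := congrArg (coeff · (i + M).toNat) hQ
  simp only [Q, coeff_sub, finsetSum_coeff, coeff_C_mul_X_pow, coeff_zero] at hcoeff
  rw [mem_Icc] at hi
  rw [sum_eq_single i (fun j hj hji => if_neg (by rw [mem_Icc] at hj; omega))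
    (fun h => absurd (mem_Icc.mpr hi) h), if_pos rfl, if_neg (by omega), sub_zero] at hcoeff
  exact hcoeff

lemma eq_zero_of_exp_I_mul_eq_one {κ : ℝ} (hκ : 0 < κ) {z : ℂ}
    (hz : Complex.exp (I * κ * z) = 1) (hlt : ‖z‖ < π / (κ / 2)) : z = 0 := by
  obtain ⟨m, hm⟩ := Complex.exp_eq_one_iff.mp hz
  have hκ0 : (κ : ℂ) ≠ 0 := by exact_mod_cast hκ.ne'
  have hz' : z = (2 * π * m / κ : ℝ) := by
    apply mul_left_cancel₀ (mul_ne_zero I_ne_zero hκ0)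
    rw [hm]
    push_cast
    field_simp
  have hm0 : m = 0 := by
    rw [hz', Complex.norm_real, Real.norm_eq_abs, abs_div, abs_mul, abs_of_pos hκ,
      abs_of_pos Real.two_pi_pos, div_div_eq_mul_div, div_lt_div_iff_of_pos_right hκ] at hlt
    have : |(m : ℝ)| < 1 := by nlinarith [Real.pi_pos]
    exact Int.abs_lt_one_iff.mp (by exact_mod_cast this)
  simp [hz', hm0]

section Uniqueness

variable {n : ℕ}

lemma Diversity.injective_fourierExp {α β : Fin n → ℝ} (hdiv : Diversity n α β) {w : ℤ × ℤ}
    (hw : w ∈ Zf2 (2 * n - 1)) (hw0 : w ≠ (0, 0)) :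
    Function.Injective fun l => fourierExp (2 * n - 1) (α l * w.1 + β l * w.2 : ℝ) := by
  intro l l' h
  by_contra hne
  have hp : 2 * n - 1 ≠ 0 := (pos_of_mem_Zf (mem_product.mp hw).1).ne'
  obtain ⟨m, hm⟩ := exists_int_of_fourierExp_eq hp h
  exact hdiv.2 w hw hw0 l l' hne ⟨m, by exact_mod_cast hm⟩

theorem eq_zero_of_proj_dx_eq (hn : 2 ≤ n) {f : ℤ → ℤ → ℤ → ℂ} (hf : IsObj n f)
    {α β : Fin n → ℝ} (hdiv : Diversity n α β)
    (hproj : ∀ l l', ∀ c ∈ Zf2 (2 * n - 1),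
      proj n f (.dx (α l) (β l)) c = proj n f (.dx (α l') (β l')) c)
    {i : ℤ} (hi0 : i ≠ 0) (j k : ℤ) : f i j k = 0 := by
  by_cases hi : i ∈ Zf n
  swap
  · exact hf i j k (Or.inl hi)
  have hslice : ∀ w ∈ Zf2 (2 * n - 1), w ≠ (0, 0) → ft2 n (fun c => f i c.1 c.2) w.1 w.2 = 0 := by
    intro w hw hw0
    obtain ⟨hw₁, hw₂⟩ := mem_product.mp hw
    let l₀ : Fin n := ⟨0, by omega⟩
    refine eq_zero_of_sum_mul_zpow_eq (c := fun i => ft2 n (fun c => f i c.1 c.2) w.1 w.2)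
      (v := ft2 n (proj n f (.dx (α l₀) (β l₀))) w.1 w.2) (fun l => fourierExp_ne_zero _)
      (hdiv.injective_fourierExp hw hw0) ?_ (fun l => ?_) hi hi0
    · simp only [Fintype.card_fin]
      omega
    · calc _ = ft3 n f (-(α l * w.1 + β l * w.2)) w.1 w.2 := by
            rw [ft3_eq_sum_ft2_mul_zpow hf, Complex.ofReal_neg, neg_neg, Zf]
        _ = ft2 n (proj n f (.dx (α l) (β l))) w.1 w.2 := (ft2_proj_dx f _ _ hw₁ hw₂).symm
        _ = _ := by
            simp only [ft2_eq_sum]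
            exact sum_congr rfl fun c hc => by rw [hproj l l₀ c hc]
  by_cases hjk : j ∈ Zf n ∧ k ∈ Zf n
  · have hout : ((n : ℤ) - 1, (0 : ℤ)) ∈ Zf2 (2 * n - 1) := by
      simp only [Zf2, mem_product, mem_Zf]
      omega
    have hzero : f i ((n : ℤ) - 1) 0 = 0 := hf _ _ _ (Or.inr (Or.inl (by rw [mem_Zf]; omega)))
    rw [← hzero]
    exact eq_of_ft2_eq_zero hslice (a := (j, k)) (mem_product.mpr
      ⟨Zf_subset_Zf_two_mul_sub_one hjk.1, Zf_subset_Zf_two_mul_sub_one hjk.2⟩) hout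
  · exact hf i j k (Or.inr (not_and_or.mp hjk))

lemma eq_zero_of_proj_dx_eq_proj_dz {f : ℤ → ℤ → ℤ → ℂ} (hf : IsObj n f)
    (hslab : ∀ i ≠ 0, ∀ j k, f i j k = 0) {α β : ℝ}
    (hproj : ∀ c ∈ Zf2 (2 * n - 1), proj n f (.dx α β) c = proj n f (.dz 0 0) c)
    {i j k : ℤ} (hijk : (i, j, k) ≠ (0, 0, 0)) : f i j k = 0 := by
  have hsum : ∀ j k, j ∈ Zf n → k ∈ Zf n → f 0 j k = ∑ k' ∈ Zf n, f j k k' := fun j k hj hk => by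
    rw [← proj_dx_of_eq_zero_of_ne_zero hslab α β (c := (j, k)) hj hk,
      hproj _ (mem_product.mpr ⟨Zf_subset_Zf_two_mul_sub_one hj, Zf_subset_Zf_two_mul_sub_one hk⟩),
      proj_dz_zero_zero f hj hk]
  have hline : ∀ j k, j ≠ 0 → f 0 j k = 0 := by
    intro j k hj0
    by_cases hjk : j ∈ Zf n ∧ k ∈ Zf n
    · rw [hsum j k hjk.1 hjk.2]
      exact sum_eq_zero fun k' _ => hslab j hj0 k k'
    · exact hf 0 j k (Or.inr (not_and_or.mp hjk))
  rcases eq_or_ne i 0 with rfl | hi0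
  · rcases eq_or_ne j 0 with rfl | hj0
    · have hk0 : k ≠ 0 := by simpa using hijk
      by_cases hk : k ∈ Zf n
      · rw [hsum 0 k (zero_mem_Zf_of_mem hk) hk]
        exact sum_eq_zero fun k' _ => hline k k' hk0
      · exact hf 0 0 k (Or.inr (Or.inr hk))
    · exact hline j k hj0
  · exact hslab i hi0 j k

lemma Itoh.sub {κ : ℝ} {f g : ℤ → ℤ → ℤ → ℂ} (hg : Itoh n κ g) (hf : Itoh n κ f) :
    Itoh n (κ / 2) fun i j k => g i j k - f i j k := by
  intro i j k i' j' k' hi hj hk hi' hj' hk' hadj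
  calc ‖(g i j k - f i j k) - (g i' j' k' - f i' j' k')‖
      = ‖(g i j k - g i' j' k') - (f i j k - f i' j' k')‖ := by ring_nf
    _ ≤ ‖g i j k - g i' j' k'‖ + ‖f i j k - f i' j' k'‖ := norm_sub_le _ _
    _ < π / κ + π / κ := add_lt_add (hg i j k i' j' k' hi hj hk hi' hj' hk' hadj)
        (hf i j k i' j' k' hi hj hk hi' hj' hk' hadj)
    _ = π / (κ / 2) := by rw [div_div_eq_mul_div]; ring

lemma eq_zero_at_origin_of_itoh {κ : ℝ} (hκ : 0 < κ) (hn : 3 ≤ n) {h : ℤ → ℤ → ℤ → ℂ}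
    (hI : Itoh n (κ / 2) h) (hsupp : ∀ i j k, (i, j, k) ≠ (0, 0, 0) → h i j k = 0)
    (hexp : Complex.exp (I * κ * proj n h (.dz 0 0) (0, 0)) = 1) : h 0 0 0 = 0 := by
  have h0 : (0 : ℤ) ∈ Zf n := by rw [mem_Zf]; omega
  have h1 : (1 : ℤ) ∈ Zf n := by rw [mem_Zf]; omega
  refine eq_zero_of_exp_I_mul_eq_one hκ ?_ ?_
  · rwa [proj_dz_zero_zero h h0 h0, sum_eq_single 0 (fun k _ hk => hsupp 0 0 k (by simpa using hk))
      (fun h => absurd h0 h)] at hexp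
  · simpa [hsupp 1 0 0 (by simp)] using
      hI 0 0 0 1 0 0 h0 h0 h0 h1 h0 h0 (Or.inl ⟨by norm_num, rfl, rfl⟩)

end Uniqueness

theorem phase_unwrapping_unique_general
    (n : ℕ) (hn3 : 3 ≤ n)
    (κ : ℝ) (hκ : 0 < κ)
    (f g : ℤ → ℤ → ℤ → ℂ) (hf : IsObj n f) (hg : IsObj n g)
    (hfI : Itoh n κ f) (hgI : Itoh n κ g)
    (α β : Fin n → ℝ) (hdiv : Diversity n α β)
    (T : Finset Dir)
    (hTx : ∀ l : Fin n, Dir.dx (α l) (β l) ∈ T)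
    (hTz : Dir.dz 0 0 ∈ T)
    (ha : ∀ t ∈ T, ∀ m ∈ Zf2 (2 * n - 1),
      Complex.exp (Complex.I * (κ : ℂ) * proj n g t m)
        = Complex.exp (Complex.I * (κ : ℂ) * proj n f t m))
    (hb : ∀ t ∈ T, ∀ t' ∈ T, ∀ m ∈ Zf2 (2 * n - 1),
      proj n g t m - proj n f t m = proj n g t' m - proj n f t' m) :
    ∀ i j k : ℤ, g i j k = f i j k := by
  set h : ℤ → ℤ → ℤ → ℂ := fun i j k => g i j k - f i j k with hh
  have hobj : IsObj n h := hg.sub hf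
  have hproj : ∀ t ∈ T, ∀ t' ∈ T, ∀ c ∈ Zf2 (2 * n - 1), proj n h t c = proj n h t' c := by
    simpa only [hh, proj_sub] using hb
  have hslab : ∀ i ≠ 0, ∀ j k, h i j k = 0 := fun i hi =>
    eq_zero_of_proj_dx_eq (by omega) hobj hdiv (fun l l' => hproj _ (hTx l) _ (hTx l')) hi
  have hsupp : ∀ i j k, (i, j, k) ≠ (0, 0, 0) → h i j k = 0 := fun i j k =>
    eq_zero_of_proj_dx_eq_proj_dz hobj hslab (hproj _ (hTx ⟨0, by omega⟩) _ hTz)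
  have hexp : Complex.exp (I * κ * proj n h (.dz 0 0) (0, 0)) = 1 := by
    have h0 : (0 : ℤ) ∈ Zf (2 * n - 1) := by rw [mem_Zf]; omega
    rw [hh, proj_sub, mul_sub, Complex.exp_sub, ha _ hTz _ (mem_product.mpr ⟨h0, h0⟩),
      div_self (Complex.exp_ne_zero _)]
  have horigin : h 0 0 0 = 0 := eq_zero_at_origin_of_itoh hκ hn3 (hgI.sub hfI) hsupp hexp
  intro i j k
  rw [← sub_eq_zero]
  by_cases hijk : (i, j, k) = (0, 0, 0)
  · obtain ⟨rfl, rfl, rfl⟩ : i = 0 ∧ j = 0 ∧ k = 0 := by simpa using hijk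
    exact horigin
  · exact hsupp i j k hijk

/-- Uniqueness for 3D phase unwrapping (algebraic core). -/
theorem phase_unwrapping_unique
    (n : ℕ) (hn : Odd n) (hn3 : 3 ≤ n)
    (κ : ℝ) (hκ : 0 < κ)
    (f g : ℤ → ℤ → ℤ → ℂ) (hf : IsObj n f) (hg : IsObj n g)
    (hfI : Itoh n κ f) (hgI : Itoh n κ g)
    (α β : Fin n → ℝ) (hdiv : Diversity n α β)
    (γ0 : ℝ) (hγ0 : |γ0| < 1)
    (T : Finset Dir)
    (hTx : ∀ l : Fin n, Dir.dx (α l) (β l) ∈ T)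
    (hTy : Dir.dy 0 γ0 ∈ T)
    (hTz : Dir.dz 0 0 ∈ T)
    (ha : ∀ t ∈ T, ∀ m ∈ Zf2 (2 * n - 1),
      Complex.exp (Complex.I * (κ : ℂ) * proj n g t m)
        = Complex.exp (Complex.I * (κ : ℂ) * proj n f t m))
    (hb : ∀ t ∈ T, ∀ t' ∈ T, ∀ m ∈ Zf2 (2 * n - 1),
      proj n g t m - proj n f t m = proj n g t' m - proj n f t' m) :
    ∀ i j k : ℤ, g i j k = f i j k :=
  phase_unwrapping_unique_general n hn3 κ hκ f g hf hg hfI hgI α β hdiv T hTx hTz ha hb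

end Tomo3D
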